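/- Let u be C² on a tubular neighborhood of a regular C³ curve g and û = u ∘ P with P(η,ξ) = g(ξ)+ηn(ξ). Then the Laplacian satisfies Δu(x) = û_ηη + J₀ û_ξξ + J₁ û_η + J₂ û_ξ evaluated at (η,ξ) = P⁻¹(x), where J₀ = (ψ/‖g'‖)², J₁ = κψ, J₂ = −(ψ/‖g'‖)²(ηκ'ψ + g'·g''/‖g'‖²) and ψ = (1+ηκ)⁻¹. -/

import Mathlib

/-!
The Laplacian is invariant under rotations, so at `x = g ξ + η n ξ` it can be computed in the
orthonormal frame `(τ ξ, n ξ)`: `Δu = D²u(τ,τ) + D²u(n,n)`. Along the normal line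
`t ↦ g ξ + t n ξ` the second derivative of `u` is `D²u(n,n)`. By the Frenet formula `n' = κ g'`,
the parallel curve `s ↦ g s + η n s` has velocity `(1 + ηκ) g'`, so along it the second
derivative of `u` is `(1 + ηκ)² ‖g'‖² D²u(τ,τ)` plus the first-order term
`Du(ηκ' g' + (1 + ηκ) g'')`. Splitting `g'' = (g'·g''/‖g'‖²) g' - κ ‖g'‖² n` in the frame turns
that term into multiples of `û_ξ` and `û_η`, which are exactly what `J₁` and `J₂` cancel.
-/

noncomputable section

def lap2 (u : EuclideanSpace ℝ (Fin 2) → ℝ) (x : EuclideanSpace ℝ (Fin 2)) : ℝ :=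
  ∑ i : Fin 2,
    fderiv ℝ (fun y => fderiv ℝ u y (EuclideanSpace.single i 1)) x
      (EuclideanSpace.single i 1)

open InnerProductSpace Laplacian Topology

local notation "ℝ²" => EuclideanSpace ℝ (Fin 2)

theorem EuclideanSpace.inner_fin_two (v w : ℝ²) : ⟪v, w⟫_ℝ = v 0 * w 0 + v 1 * w 1 := by
  simp [PiLp.inner_apply, Fin.sum_univ_two, mul_comm]

theorem EuclideanSpace.norm_sq_fin_two (v : ℝ²) : ‖v‖ ^ 2 = v 0 ^ 2 + v 1 ^ 2 := by
  simp [EuclideanSpace.norm_sq_eq, Fin.sum_univ_two]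

def rotCW : ℝ² →L[ℝ] ℝ² :=
  LinearMap.toContinuousLinearMap
    { toFun := fun v => !₂[v 1, -v 0]
      map_add' := fun v w => by ext i; fin_cases i <;> simp [add_comm]
      map_smul' := fun c v => by ext i; fin_cases i <;> simp }

@[simp] theorem rotCW_apply_zero (v : ℝ²) : rotCW v 0 = v 1 := rfl

@[simp] theorem rotCW_apply_one (v : ℝ²) : rotCW v 1 = -v 0 := rfl

theorem inner_rotCW_self (v : ℝ²) : ⟪v, rotCW v⟫_ℝ = 0 := by
  rw [EuclideanSpace.inner_fin_two]; simp; ring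

theorem norm_rotCW (v : ℝ²) : ‖rotCW v‖ = ‖v‖ := by
  rw [← sq_eq_sq₀ (norm_nonneg _) (norm_nonneg _), EuclideanSpace.norm_sq_fin_two,
    EuclideanSpace.norm_sq_fin_two]
  simp; ring

theorem norm_sq_smul_eq_inner_smul_sub (v a : ℝ²) :
    ‖v‖ ^ 2 • a = ⟪v, a⟫_ℝ • v - ⟪v, rotCW a⟫_ℝ • rotCW v := by
  ext i
  fin_cases i <;> simp [EuclideanSpace.inner_fin_two, EuclideanSpace.norm_sq_fin_two] <;> ring

theorem orthonormal_rotCW {t : ℝ²} (ht : ‖t‖ = 1) : Orthonormal ℝ ![t, rotCW t] := by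
  simp [orthonormal_vecCons_iff, ht, norm_rotCW, inner_rotCW_self]

theorem HasDerivAt.norm {F : Type*} [NormedAddCommGroup F] [InnerProductSpace ℝ F]
    {f : ℝ → F} {f' : F} {x : ℝ} (hf : HasDerivAt f f' x) (h0 : f x ≠ 0) :
    HasDerivAt (‖f ·‖) (⟪f x, f'⟫_ℝ / ‖f x‖) x := by
  have h := hf.norm_sq.sqrt (by positivity)
  simp only [Real.sqrt_sq (norm_nonneg _)] at h
  convert h using 1
  have : 0 < ‖f x‖ := norm_pos_iff.2 h0
  field_simp

theorem HasDerivAt.rotCW_inv_norm_smul {f : ℝ → ℝ²} {f' : ℝ²} {x : ℝ} (hf : HasDerivAt f f' x)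
    (h0 : f x ≠ 0) :
    HasDerivAt (fun t => rotCW (‖f t‖⁻¹ • f t)) ((⟪f x, rotCW f'⟫_ℝ / ‖f x‖ ^ 3) • f x) x := by
  have h : HasDerivAt (fun t => rotCW (‖f t‖⁻¹ • f t)) _ x :=
    rotCW.hasFDerivAt.comp_hasDerivAt x (((hf.norm h0).inv (norm_ne_zero_iff.2 h0)).smul hf)
  convert h using 1
  have hsq := EuclideanSpace.norm_sq_fin_two (f x)
  ext i; fin_cases i <;> simp [EuclideanSpace.inner_fin_two] <;> field_simp
  · linear_combination (-f' 1) * hsq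
  · linear_combination f' 0 * hsq

section SecondDerivativeAlongCurve

variable {E F : Type*} [NormedAddCommGroup E] [NormedSpace ℝ E] [NormedAddCommGroup F]
  [NormedSpace ℝ F]

theorem deriv_comp_eq_fderiv {u : E → F} {γ : ℝ → E} {γ' : E} {s : ℝ}
    (hu : DifferentiableAt ℝ u (γ s)) (hγ : HasDerivAt γ γ' s) :
    deriv (fun t => u (γ t)) s = fderiv ℝ u (γ s) γ' :=
  (hu.hasFDerivAt.comp_hasDerivAt s hγ).deriv

theorem iteratedDeriv_two_comp_eq {u : E → F} {γ γ' : ℝ → E} {γ'' : E} {s : ℝ}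
    (hu : ContDiffAt ℝ 2 u (γ s)) (hγ : ∀ᶠ t in 𝓝 s, HasDerivAt γ (γ' t) t)
    (hγ' : HasDerivAt γ' γ'' s) :
    iteratedDeriv 2 (fun t => u (γ t)) s =
      fderiv ℝ (fderiv ℝ u) (γ s) (γ' s) (γ' s) + fderiv ℝ u (γ s) γ'' := by
  have hu_near : ∀ᶠ t in 𝓝 s, DifferentiableAt ℝ u (γ t) :=
    hγ.self_of_nhds.continuousAt.eventually (hu.eventually (by simp)) |>.mono
      fun t ht => ht.differentiableAt (by simp)
  have hderiv : deriv (fun t => u (γ t)) =ᶠ[𝓝 s] fun t => fderiv ℝ u (γ t) (γ' t) :=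
    (hu_near.and hγ).mono fun t ⟨hut, hγt⟩ => deriv_comp_eq_fderiv hut hγt
  have hDu : HasFDerivAt (fderiv ℝ u) (fderiv ℝ (fderiv ℝ u) (γ s)) (γ s) :=
    ((hu.fderiv_right (m := 1) (by norm_num)).differentiableAt (by simp)).hasFDerivAt
  rw [iteratedDeriv_succ, iteratedDeriv_one, hderiv.deriv_eq]
  exact ((hDu.comp_hasDerivAt s hγ.self_of_nhds).clm_apply hγ').deriv

end SecondDerivativeAlongCurve

theorem norm_sq_mul_laplacian_eq (u : ℝ² → ℝ) (x : ℝ²) {v : ℝ²} (hv : v ≠ 0) :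
    ‖v‖ ^ 2 * Δ u x =
      fderiv ℝ (fderiv ℝ u) x v v + fderiv ℝ (fderiv ℝ u) x (rotCW v) (rotCW v) := by
  have hnorm : ‖v‖ ≠ 0 := norm_ne_zero_iff.2 hv
  have hon := orthonormal_rotCW (t := ‖v‖⁻¹ • v) (by simp [norm_smul, hnorm])
  let b := (basisOfOrthonormalOfCardEqFinrank hon (by simp)).toOrthonormalBasis
    (by simpa using hon)
  simp [laplacian_eq_iteratedFDeriv_orthonormalBasis u b, b, iteratedFDeriv_two_apply]
  field_simp

theorem lap2_eq_laplacian {u : ℝ² → ℝ} {x : ℝ²} (hu : ContDiffAt ℝ 2 u x) :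
    lap2 u x = Δ u x := by
  have hDu : DifferentiableAt ℝ (fderiv ℝ u) x :=
    (hu.fderiv_right (m := 1) (by norm_num)).differentiableAt (by simp)
  simp [lap2, laplacian_eq_iteratedFDeriv_orthonormalBasis u (EuclideanSpace.basisFun (Fin 2) ℝ),
    iteratedFDeriv_two_apply, fderiv_clm_apply hDu (differentiableAt_const _)]

section PlaneCurve

variable {g : ℝ → ℝ²} {s : ℝ}

def unitNormal (g : ℝ → ℝ²) (s : ℝ) : ℝ² := rotCW (‖deriv g s‖⁻¹ • deriv g s)

def signedCurvature (g : ℝ → ℝ²) (s : ℝ) : ℝ :=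
  ⟪deriv g s, rotCW (deriv (deriv g) s)⟫_ℝ / ‖deriv g s‖ ^ 3

theorem hasDerivAt_unitNormal (hg : DifferentiableAt ℝ (deriv g) s) (hs : deriv g s ≠ 0) :
    HasDerivAt (unitNormal g) (signedCurvature g s • deriv g s) s :=
  hg.hasDerivAt.rotCW_inv_norm_smul hs

theorem norm_sq_smul_deriv_deriv (hs : deriv g s ≠ 0) :
    ‖deriv g s‖ ^ 2 • deriv (deriv g) s = ⟪deriv g s, deriv (deriv g) s⟫_ℝ • deriv g s -
      (signedCurvature g s * ‖deriv g s‖ ^ 3) • rotCW (deriv g s) := by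
  rw [signedCurvature, div_mul_cancel₀ _ (pow_ne_zero 3 (norm_ne_zero_iff.2 hs))]
  exact norm_sq_smul_eq_inner_smul_sub _ _

theorem differentiableAt_signedCurvature (hg : ContDiff ℝ 3 g) (hs : deriv g s ≠ 0) :
    DifferentiableAt ℝ (signedCurvature g) s := by
  have hg' : Differentiable ℝ (deriv g) := (hg.deriv' (n := 2)).differentiable (by norm_num)
  have hg'' : Differentiable ℝ (deriv (deriv g)) :=
    ((hg.deriv' (n := 2)).deriv' (n := 1)).differentiable (by norm_num)
  exact ((hg' s).inner ℝ (rotCW.differentiableAt.comp s (hg'' s))).div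
    (((hg' s).norm ℝ hs).pow 3) (pow_ne_zero 3 (norm_ne_zero_iff.2 hs))

theorem hasDerivAt_parallelCurve (hg : ContDiff ℝ 2 g) (hs : deriv g s ≠ 0) (η : ℝ) :
    HasDerivAt (fun t => g t + η • unitNormal g t)
      ((1 + η * signedCurvature g s) • deriv g s) s := by
  have hn := hasDerivAt_unitNormal ((hg.deriv' (n := 1)).differentiable (by norm_num) s) hs
  exact ((hg.differentiable (by norm_num) s).hasDerivAt.add (hn.const_smul η)).congr_deriv
    (by module)

theorem hasDerivAt_parallelCurve_velocity (hg : ContDiff ℝ 3 g) (hs : deriv g s ≠ 0) (η : ℝ) :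
    HasDerivAt (fun t => (1 + η * signedCurvature g t) • deriv g t)
      ((η * deriv (signedCurvature g) s) • deriv g s +
        (1 + η * signedCurvature g s) • deriv (deriv g) s) s :=
  ((((differentiableAt_signedCurvature hg hs).hasDerivAt.const_mul η).const_add 1).smul
    ((hg.deriv' (n := 2)).differentiable (by norm_num) s).hasDerivAt).congr_deriv (add_comm _ _)

end PlaneCurve

/-- The Laplacian in Frenet coordinates:
`Δu(x) = û_ηη + J₀ û_ξξ + J₁ û_η + J₂ û_ξ` at `(η,ξ) = P⁻¹(x)`. -/
theorem laplacian_in_frenet_coordinates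
    (g : ℝ → EuclideanSpace ℝ (Fin 2))
    (hg : ContDiff ℝ 3 g)
    (hreg : ∀ ξ : ℝ, deriv g ξ ≠ 0)
    (τ n : ℝ → EuclideanSpace ℝ (Fin 2)) (κ : ℝ → ℝ)
    (hτ : ∀ ξ, τ ξ = ‖deriv g ξ‖⁻¹ • deriv g ξ)
    (hn : ∀ ξ, n ξ = ![τ ξ 1, -(τ ξ 0)])
    (hκ : ∀ ξ, κ ξ =
      (deriv g ξ 0 * deriv (deriv g) ξ 1 - deriv g ξ 1 * deriv (deriv g) ξ 0) /
        ‖deriv g ξ‖ ^ 3)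
    (ψ J0 J1 J2 : ℝ → ℝ → ℝ)
    (hψ : ∀ η ξ, ψ η ξ = (1 + η * κ ξ)⁻¹)
    (hJ0 : ∀ η ξ, J0 η ξ = (ψ η ξ / ‖deriv g ξ‖) ^ 2)
    (hJ1 : ∀ η ξ, J1 η ξ = κ ξ * ψ η ξ)
    (hJ2 : ∀ η ξ, J2 η ξ = -(ψ η ξ / ‖deriv g ξ‖) ^ 2 *
      (η * deriv κ ξ * ψ η ξ +
        (deriv g ξ 0 * deriv (deriv g) ξ 0 + deriv g ξ 1 * deriv (deriv g) ξ 1) /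
          ‖deriv g ξ‖ ^ 2))
    (N : Set (EuclideanSpace ℝ (Fin 2))) (hN : IsOpen N)
    (u : EuclideanSpace ℝ (Fin 2) → ℝ) (hu : ContDiffOn ℝ 2 u N)
    (η ξ : ℝ) (hx : g ξ + η • n ξ ∈ N) (hne : 1 + η * κ ξ ≠ 0) :
    lap2 u (g ξ + η • n ξ)
      = iteratedDeriv 2 (fun t => u (g ξ + t • n ξ)) η +
        J0 η ξ * iteratedDeriv 2 (fun s => u (g s + η • n s)) ξ +
        J1 η ξ * deriv (fun t => u (g ξ + t • n ξ)) η +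
        J2 η ξ * deriv (fun s => u (g s + η • n s)) ξ := by
  obtain rfl : n = unitNormal g :=
    funext fun s => by ext i; fin_cases i <;> simp [unitNormal, hn, hτ]
  obtain rfl : κ = signedCurvature g :=
    funext fun s => by simp [signedCurvature, hκ, EuclideanSpace.inner_fin_two]; ring
  have hu2 : ContDiffAt ℝ 2 u (g ξ + η • unitNormal g ξ) := hu.contDiffAt (hN.mem_nhds hx)
  have hu1 := hu2.differentiableAt (by norm_num)
  have hline : ∀ t : ℝ, HasDerivAt (fun t => g ξ + t • unitNormal g ξ) (unitNormal g ξ) t :=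
    fun t => by simpa using ((hasDerivAt_id t).smul_const (unitNormal g ξ)).const_add (g ξ)
  have hparallel := fun s => hasDerivAt_parallelCurve (s := s) (hg.of_le (by norm_num)) (hreg s) η
  rw [lap2_eq_laplacian hu2,
    iteratedDeriv_two_comp_eq hu2 (.of_forall hline) (hasDerivAt_const η _),
    iteratedDeriv_two_comp_eq hu2 (.of_forall hparallel)
      (hasDerivAt_parallelCurve_velocity hg (hreg ξ) η),
    deriv_comp_eq_fderiv hu1 (hline η), deriv_comp_eq_fderiv hu1 (hparallel ξ),
    hJ0, hJ1, hJ2, hψ, ← EuclideanSpace.inner_fin_two]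
  generalize g ξ + η • unitNormal g ξ = x
  have hΔ := norm_sq_mul_laplacian_eq u x (hreg ξ)
  have hD1 := congrArg (fderiv ℝ u x) (norm_sq_smul_deriv_deriv (hreg ξ))
  simp only [map_sub, map_smul, smul_eq_mul] at hD1
  have hv := norm_ne_zero_iff.2 (hreg ξ)
  simp only [unitNormal, map_add, map_smul, smul_eq_mul, map_zero, smul_apply]
  field_simp
  linear_combination ‖deriv g ξ‖ ^ 2 * (1 + η * signedCurvature g ξ) ^ 2 * hΔ -
    (1 + η * signedCurvature g ξ) * hD1
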